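/- arXiv:1201.1256 — 4 statements merged into one kernel-verified Lean document; each statement's English description precedes it below -/
import Mathlib

section
/- The Heisenberg–Weyl operators satisfy the composition law: for all a = (a₁, a₂) and b = (b₁, b₂) in ZMod d × ZMod d, T_a * T_b = ω^(((2⁻¹ * (a₁*b₂ - a₂*b₁)) : ZMod d).val) • T_(a+b). -/
open Matrix Complex

/-- ω = exp(2πi/d). -/
noncomputable def omegaC (d : ℕ) : ℂ := Complex.exp (2 * Real.pi * Complex.I / d)

/-- The clock matrix `Z`, with `Z x x = ω ^ x.val`. -/
noncomputable def Zmat (d : ℕ) : Matrix (ZMod d) (ZMod d) ℂ :=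
  Matrix.diagonal (fun x => omegaC d ^ x.val)

/-- The shift matrix `X`, with `X x y = 1` iff `x = y + 1`. -/
noncomputable def Xmat (d : ℕ) : Matrix (ZMod d) (ZMod d) ℂ :=
  Matrix.of fun x y => if x = y + 1 then 1 else 0

/-- The Heisenberg–Weyl operator `T_a`. -/
noncomputable def TW (d : ℕ) [NeZero d] (a : ZMod d × ZMod d) : Matrix (ZMod d) (ZMod d) ℂ :=
  omegaC d ^ ((-((2 : ZMod d)⁻¹ * a.1 * a.2)).val) • (Zmat d ^ a.1.val * Xmat d ^ a.2.val)

/-- The phase point operator at the origin, `A_0 = (1/d) • ∑ a, T_a`. -/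
noncomputable def Apoint0 (d : ℕ) [NeZero d] : Matrix (ZMod d) (ZMod d) ℂ :=
  (1 / (d : ℂ)) • ∑ a : ZMod d × ZMod d, TW d a

/-- The phase point operator `A_u = T_u * A_0 * T_uᴴ`. -/
noncomputable def Apoint (d : ℕ) [NeZero d] (u : ZMod d × ZMod d) : Matrix (ZMod d) (ZMod d) ℂ :=
  TW d u * Apoint0 d * (TW d u)ᴴ

/-!
Since `Z X = ω • (X Z)`, moving `Z ^ b₁` past `X ^ a₂` costs the phase `ω ^ (b₁ a₂)`, so
`Z^(a₁+b₁) X^(a₂+b₂) = ω ^ (b₁ a₂) • (Z^a₁ X^a₂) (Z^b₁ X^b₂)`. As `ω`, `Z` and `X` all have order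
dividing `d`, every exponent may be read in `ZMod d`, and the composition law becomes the identity
`-½a₁a₂ - ½b₁b₂ = ½(a₁b₂ - a₂b₁) - ½(a₁+b₁)(a₂+b₂) + b₁a₂` in `ZMod d`, where `½ = 2⁻¹` is a true
inverse because `d` is odd.
-/

section PowVal

variable {M : Type*} [Monoid M] {d : ℕ} {g : M}

lemma pow_val_natCast_of_pow_eq_one (hg : g ^ d = 1) (n : ℕ) :
    g ^ (n : ZMod d).val = g ^ n := by
  rw [ZMod.val_natCast, ← pow_eq_pow_mod n hg]

lemma pow_val_add_of_pow_eq_one [NeZero d] (hg : g ^ d = 1) (x y : ZMod d) :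
    g ^ (x + y).val = g ^ x.val * g ^ y.val := by
  rw [ZMod.val_add, ← pow_eq_pow_mod _ hg, pow_add]

lemma pow_val_mul_of_pow_eq_one (hg : g ^ d = 1) (x y : ZMod d) :
    g ^ (x * y).val = g ^ (x.val * y.val) := by
  rw [ZMod.val_mul, ← pow_eq_pow_mod _ hg]

end PowVal

lemma pow_mul_pow_eq_smul_of_mul_eq_smul {R A : Type*} [CommSemiring R] [Semiring A]
    [Algebra R A] {x y : A} {c : R} (h : x * y = c • (y * x)) (l k : ℕ) :
    x ^ l * y ^ k = c ^ (l * k) • (y ^ k * x ^ l) := by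
  have hk : ∀ k : ℕ, x * y ^ k = c ^ k • (y ^ k * x) := by
    intro k
    induction k with
    | zero => simp
    | succ k ih =>
      rw [pow_succ, ← mul_assoc, ih, smul_mul_assoc, mul_assoc, h, mul_smul_comm, smul_smul,
        ← mul_assoc, pow_succ]
  induction l with
  | zero => simp
  | succ l ih =>
    rw [pow_succ, mul_assoc, hk, mul_smul_comm, ← mul_assoc, ih, smul_mul_assoc, smul_smul,
      mul_assoc, ← pow_succ, ← pow_add, Nat.succ_mul, add_comm (l * k)]

lemma two_mul_inv_two_of_odd {d : ℕ} (hodd : Odd d) : (2 : ZMod d) * 2⁻¹ = 1 :=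
  ZMod.mul_inv_of_unit 2 <| by
    exact_mod_cast (ZMod.unitOfCoprime 2 (Nat.coprime_two_left.mpr hodd)).isUnit

noncomputable def weylMonomial (d : ℕ) [NeZero d] (a : ZMod d × ZMod d) :
    Matrix (ZMod d) (ZMod d) ℂ :=
  Zmat d ^ a.1.val * Xmat d ^ a.2.val

section HeisenbergWeyl

variable (d : ℕ) [NeZero d]

lemma omegaC_pow_self : omegaC d ^ d = 1 := by
  have hd : (d : ℂ) ≠ 0 := Nat.cast_ne_zero.mpr (NeZero.ne d)
  rw [omegaC, ← Complex.exp_nat_mul, mul_div_cancel₀ _ hd, Complex.exp_two_pi_mul_I]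

lemma Zmat_pow_self : Zmat d ^ d = 1 := by
  rw [Zmat, Matrix.diagonal_pow, ← Matrix.diagonal_one]
  congr 1
  funext x
  rw [Pi.pow_apply, ← pow_mul, mul_comm, pow_mul, omegaC_pow_self, one_pow]

lemma Xmat_eq_permMatrixHom : Xmat d = Matrix.permMatrixHom (Equiv.addRight 1) := by
  ext x y
  simp [Xmat, PEquiv.toMatrix_apply, eq_add_neg_iff_add_eq, eq_comm]

lemma Xmat_pow_self : Xmat d ^ d = 1 := by
  rw [Xmat_eq_permMatrixHom, ← map_pow]
  simp

lemma Zmat_mul_Xmat : Zmat d * Xmat d = omegaC d • (Xmat d * Zmat d) := by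
  ext x y
  simp only [Zmat, Xmat, Matrix.diagonal_mul, Matrix.mul_diagonal, Matrix.smul_apply,
    Matrix.of_apply, smul_eq_mul]
  split_ifs with h
  · rw [h, pow_val_add_of_pow_eq_one (omegaC_pow_self d), ← Nat.cast_one,
      pow_val_natCast_of_pow_eq_one (omegaC_pow_self d)]
    ring
  · simp

lemma Zmat_pow_mul_Xmat_pow (l k : ℕ) :
    Zmat d ^ l * Xmat d ^ k = omegaC d ^ (l * k) • (Xmat d ^ k * Zmat d ^ l) :=
  pow_mul_pow_eq_smul_of_mul_eq_smul (Zmat_mul_Xmat d) l k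

lemma TW_eq_smul_weylMonomial (a : ZMod d × ZMod d) :
    TW d a = omegaC d ^ (-((2 : ZMod d)⁻¹ * a.1 * a.2)).val • weylMonomial d a :=
  rfl

lemma weylMonomial_add (a b : ZMod d × ZMod d) :
    weylMonomial d (a + b) =
      omegaC d ^ (b.1.val * a.2.val) • (weylMonomial d a * weylMonomial d b) := by
  simp only [weylMonomial, Prod.fst_add, Prod.snd_add,
    pow_val_add_of_pow_eq_one (Zmat_pow_self d), pow_val_add_of_pow_eq_one (Xmat_pow_self d)]
  rw [mul_assoc, ← mul_assoc (Zmat d ^ b.1.val), Zmat_pow_mul_Xmat_pow, smul_mul_assoc,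
    mul_smul_comm]
  simp only [mul_assoc]

end HeisenbergWeyl

theorem heisenberg_weyl_composition_general (d : ℕ) [NeZero d] (hodd : Odd d)
    (a b : ZMod d × ZMod d) :
    TW d a * TW d b =
      omegaC d ^ (((2 : ZMod d)⁻¹ * (a.1 * b.2 - a.2 * b.1)).val) • TW d (a + b) := by
  have hω := omegaC_pow_self d
  rw [TW_eq_smul_weylMonomial, TW_eq_smul_weylMonomial, TW_eq_smul_weylMonomial,
    weylMonomial_add, smul_mul_smul_comm, smul_smul, smul_smul, ← pow_val_mul_of_pow_eq_one hω,
    ← pow_val_add_of_pow_eq_one hω, ← pow_val_add_of_pow_eq_one hω,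
    ← pow_val_add_of_pow_eq_one hω]
  congr 3
  simp only [Prod.fst_add, Prod.snd_add]
  linear_combination (a.2 * b.1) * two_mul_inv_two_of_odd hodd

/-- The Heisenberg–Weyl composition law. -/
theorem heisenberg_weyl_composition (d : ℕ) [NeZero d] (hodd : Odd d) (hd : 1 < d)
    (a b : ZMod d × ZMod d) :
    TW d a * TW d b =
      omegaC d ^ (((2 : ZMod d)⁻¹ * (a.1 * b.2 - a.2 * b.1)).val) • TW d (a + b) :=
  heisenberg_weyl_composition_general d hodd a b
end

section
/- The phase point operator at the origin is the parity operator: A_0 has entries (A_0) x y = 1 if x + y = 0 and = 0 otherwise, where A_0 = (1/d) • Σ over a ∈ ZMod d × ZMod d of T_a. -/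
open Matrix Complex

/-! With `ψ = ZMod.stdAddChar`, so that `ω ^ j.val = ψ j`, the entry `T_a x y` vanishes unless
`a₂ = x - y`, and is then `ψ (a₁ * (x - 2⁻¹ * (x - y)))`. Summing over `a₁` is orthogonality of the
primitive character `ψ`: the sum is `d` if `x - 2⁻¹ * (x - y) = 2⁻¹ * (x + y)` vanishes and `0`
otherwise, and `2` is invertible because `d` is odd. -/

section

variable {d : ℕ} [NeZero d]

lemma omegaC_pow_val (j : ZMod d) : omegaC d ^ j.val = ZMod.stdAddChar j := by
  rw [ZMod.stdAddChar_apply, ZMod.toCircle_apply, omegaC, ← Complex.exp_nat_mul]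
  ring_nf

lemma Zmat_pow (k : ℕ) :
    Zmat d ^ k = diagonal fun x => ZMod.stdAddChar ((k : ZMod d) * x) := by
  rw [Zmat, diagonal_pow]
  congr 1
  funext x
  rw [Pi.pow_apply, omegaC_pow_val, ← AddChar.map_nsmul_eq_pow, nsmul_eq_mul]

lemma Xmat_pow_apply (k : ℕ) (x y : ZMod d) :
    (Xmat d ^ k) x y = if x = y + k then 1 else 0 := by
  induction k generalizing x with
  | zero => simp [one_apply]
  | succ k ih =>
    have hshift : ∀ z : ZMod d, (x = z + 1) ↔ (z = x - 1) := fun z => by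
      rw [eq_sub_iff_add_eq, eq_comm]
    rw [pow_succ', mul_apply]
    simp only [ih]
    simp only [Xmat, of_apply, ite_mul, one_mul, zero_mul, hshift, Finset.sum_ite_eq',
      Finset.mem_univ, if_true, sub_eq_iff_eq_add, Nat.cast_succ, add_assoc]

lemma TW_apply (a : ZMod d × ZMod d) (x y : ZMod d) :
    TW d a x y = if x = y + a.2 then ZMod.stdAddChar (a.1 * x - 2⁻¹ * a.1 * a.2) else 0 := by
  rw [TW, Matrix.smul_apply, Zmat_pow, diagonal_mul, Xmat_pow_apply, omegaC_pow_val,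
    ZMod.natCast_zmod_val, ZMod.natCast_zmod_val, smul_eq_mul, sub_eq_neg_add,
    AddChar.map_add_eq_mul]
  split_ifs <;> simp

lemma sum_TW_apply (x y : ZMod d) :
    ∑ a, TW d a x y = if x - 2⁻¹ * (x - y) = 0 then (d : ℂ) else 0 := by
  have hcollapse : ∀ b : ZMod d, ∑ c, TW d (b, c) x y =
      ZMod.stdAddChar (b * (x - 2⁻¹ * (x - y))) := fun b => by
    have hshift : ∀ c : ZMod d, (x = y + c) ↔ (c = x - y) := fun c => by
      rw [eq_sub_iff_add_eq, add_comm, eq_comm]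
    simp only [TW_apply, hshift, Finset.sum_ite_eq', Finset.mem_univ, if_true]
    ring_nf
  rw [Fintype.sum_prod_type]
  simp only [hcollapse, AddChar.sum_mulShift _ (ZMod.isPrimitive_stdAddChar d), ZMod.card,
    Nat.cast_ite, Nat.cast_zero]

end

lemma isUnit_two_of_odd {d : ℕ} (hodd : Odd d) : IsUnit (2 : ZMod d) := by
  rw [← Nat.cast_two, ZMod.isUnit_iff_coprime]
  exact Nat.coprime_two_left.mpr hodd

theorem phase_point_origin_is_parity_general (d : ℕ) [NeZero d] (hodd : Odd d)
    (x y : ZMod d) :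
    Apoint0 d x y = if x + y = 0 then 1 else 0 := by
  have htwo : (2 : ZMod d) * 2⁻¹ = 1 := ZMod.mul_inv_of_unit _ (isUnit_two_of_odd hodd)
  have hhalf : x - 2⁻¹ * (x - y) = 2⁻¹ * (x + y) := by linear_combination (-x) * htwo
  have hd : (d : ℂ) ≠ 0 := NeZero.ne _
  rw [Apoint0, Matrix.smul_apply, Matrix.sum_apply, sum_TW_apply, hhalf]
  simp only [(IsUnit.of_mul_eq_one_right _ htwo).mul_right_eq_zero]
  split_ifs
  · rw [smul_eq_mul, one_div_mul_cancel hd]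
  · rw [smul_zero]

/-- The phase point operator at the origin is the parity operator. -/
theorem phase_point_origin_is_parity (d : ℕ) [NeZero d] (hodd : Odd d) (hd : 1 < d)
    (x y : ZMod d) :
    Apoint0 d x y = if x + y = 0 then 1 else 0 :=
  phase_point_origin_is_parity_general d hodd x y
end

section
/- Every phase point operator is Hermitian: for all u ∈ ZMod d × ZMod d, A_uᴴ = A_u. -/
open Matrix Complex

/-! The phase `ω ^ (-2⁻¹ a₁ a₂)` in `T_a` makes `T_aᴴ = T_{-a}`: reordering `Xᴴ Zᴴ` into
`Z X` order costs `ω ^ (-a₁ a₂)`, which the phase absorbs because `2 · 2⁻¹ = 1` for odd `d`.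
Hence `A_0 = d⁻¹ ∑ T_a` is Hermitian after reindexing by `a ↦ -a`, and so is every
conjugate `A_u = T_u A_0 T_uᴴ`. -/

namespace PhasePoint

variable {d : ℕ} [NeZero d]

local notation "ψ" => (ZMod.stdAddChar : AddChar (ZMod d) ℂ)

theorem omegaC_pow_val (a : ZMod d) : omegaC d ^ a.val = ψ a := by
  rw [ZMod.stdAddChar_apply, ZMod.toCircle_apply, omegaC, ← Complex.exp_nat_mul]
  ring_nf

theorem Xmat_pow_apply (k : ℕ) (x y : ZMod d) :
    (Xmat d ^ k) x y = if x = y + k then 1 else 0 := by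
  induction k generalizing x with
  | zero => simp [Matrix.one_apply, eq_comm]
  | succ k ih =>
    rw [pow_succ', Matrix.mul_apply, Finset.sum_eq_single (x - 1)]
    · rw [ih]
      simp only [Xmat, Matrix.of_apply, sub_add_cancel, if_true, one_mul, Nat.cast_succ,
        sub_eq_iff_eq_add, add_assoc]
    · intro b _ hb
      simp only [Xmat, Matrix.of_apply, ite_mul, one_mul, zero_mul]
      exact if_neg fun h => hb (eq_sub_of_add_eq h.symm)
    · simp

theorem TW_apply (a : ZMod d × ZMod d) (x y : ZMod d) :
    TW d a x y = if x = y + a.2 then ψ (-((2 : ZMod d)⁻¹ * a.1 * a.2) + x * a.1) else 0 := by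
  rw [TW, Zmat, Matrix.diagonal_pow, Matrix.smul_apply, Matrix.diagonal_mul, Xmat_pow_apply,
    ZMod.natCast_val, ZMod.cast_id', id]
  split_ifs
  · simp only [Pi.pow_apply, omegaC_pow_val, mul_one, smul_eq_mul, AddChar.map_add_eq_mul,
      ← AddChar.map_nsmul_eq_pow, nsmul_eq_mul, ZMod.natCast_val, ZMod.cast_id', id, mul_comm x]
  · simp

omit [NeZero d] in
theorem two_mul_inv_two_of_odd (hodd : Odd d) : (2 : ZMod d) * 2⁻¹ = 1 :=
  ZMod.mul_inv_of_unit 2 <| by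
    simpa using (ZMod.isUnit_iff_coprime 2 d).mpr (Nat.coprime_two_left.mpr hodd)

theorem conjTranspose_TW (hodd : Odd d) (a : ZMod d × ZMod d) : (TW d a)ᴴ = TW d (-a) := by
  ext x y
  rw [Matrix.conjTranspose_apply, TW_apply, TW_apply, Prod.fst_neg, Prod.snd_neg]
  by_cases h : y = x + a.2
  · rw [if_pos h, if_pos (by rw [h]; ring), Complex.star_def, ← AddChar.map_neg_eq_conj]
    congr 1
    subst h
    -- the two phases differ by `a₁ a₂ (2 · 2⁻¹ - 1)`
    linear_combination a.1 * a.2 * two_mul_inv_two_of_odd hodd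
  · rw [if_neg h, if_neg (fun h' => h (by rw [h']; ring)), star_zero]

theorem isHermitian_Apoint0 (hodd : Odd d) : (Apoint0 d).IsHermitian := by
  rw [Matrix.IsHermitian, Apoint0, Matrix.conjTranspose_smul, Matrix.conjTranspose_sum]
  simp only [conjTranspose_TW hodd]
  rw [Fintype.sum_equiv (Equiv.neg _) (fun a => TW d (-a)) (TW d) fun _ => rfl]
  simp

end PhasePoint

theorem phase_point_hermitian_general (d : ℕ) [NeZero d] (hodd : Odd d)
    (u : ZMod d × ZMod d) :
    (Apoint d u)ᴴ = Apoint d u :=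
  Matrix.isHermitian_mul_mul_conjTranspose (TW d u) (PhasePoint.isHermitian_Apoint0 hodd)

/-- Every phase point operator is Hermitian. -/
theorem phase_point_hermitian (d : ℕ) [NeZero d] (hodd : Odd d) (hd : 1 < d)
    (u : ZMod d × ZMod d) :
    (Apoint d u)ᴴ = Apoint d u :=
  phase_point_hermitian_general d hodd u
end

section
/- Every phase point operator has unit trace: for all u ∈ ZMod d × ZMod d, trace(A_u) = 1. -/
open Matrix Complex

/-!
Conjugation by the unitary `T_u` preserves the trace, so `tr A_u = tr A_0 = (1/d) ∑_a tr T_a`.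
Only `T_0 = 1` contributes: for `a₂ ≠ 0` the shift `X ^ a₂` has zero diagonal, and for `a₂ = 0`,
`a₁ ≠ 0` the trace of `Z ^ a₁` is the sum of a nontrivial additive character of `ZMod d`.
-/

theorem Matrix.diagonal_mem_unitaryGroup {n α : Type*} [Fintype n] [DecidableEq n] [CommRing α]
    [StarRing α] {v : n → α} (hv : ∀ i, v i ∈ unitary α) :
    diagonal v ∈ unitaryGroup n α := by
  rw [mem_unitaryGroup_iff', star_eq_conjTranspose, diagonal_conjTranspose,
    diagonal_mul_diagonal, ← diagonal_one]
  exact congrArg diagonal (funext fun i => Unitary.star_mul_self_of_mem (hv i))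

theorem Matrix.trace_mul_mul_conjTranspose_of_mem_unitaryGroup {n α : Type*} [Fintype n]
    [DecidableEq n] [CommRing α] [StarRing α] {U : Matrix n n α} (hU : U ∈ unitaryGroup n α)
    (A : Matrix n n α) : (U * A * Uᴴ).trace = A.trace := by
  rw [trace_mul_cycle, ← star_eq_conjTranspose, mem_unitaryGroup_iff'.mp hU, one_mul]

theorem IsPrimitiveRoot.sum_zmod_pow_val {R : Type*} [CommRing R] [IsDomain R] {d : ℕ} [NeZero d]
    {ζ : R} (hζ : IsPrimitiveRoot ζ d) (k : ℕ) :
    ∑ x : ZMod d, (ζ ^ k) ^ x.val = if (k : ZMod d) = 0 then (d : R) else 0 := by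
  classical
  have hζk : (ζ ^ k) ^ d = 1 := by rw [← pow_mul, mul_comm, pow_mul, hζ.pow_eq_one, one_pow]
  have htriv : AddChar.zmodChar d hζk = 0 ↔ (k : ZMod d) = 0 := by
    rw [← not_iff_not, ← ne_eq, ← AddChar.one_eq_zero, AddChar.zmod_char_ne_one_iff,
      ← Nat.cast_one, AddChar.zmodChar_apply', pow_one, ne_eq, hζ.pow_eq_one_iff_dvd,
      ZMod.natCast_eq_zero_iff]
  simp_rw [← AddChar.zmodChar_apply hζk, AddChar.sum_eq_ite, ZMod.card, htriv]

lemma omegaC_isPrimitiveRoot (d : ℕ) [NeZero d] : IsPrimitiveRoot (omegaC d) d :=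
  Complex.isPrimitiveRoot_exp d (NeZero.ne d)

lemma omegaC_mem_unitary (d : ℕ) [NeZero d] : omegaC d ∈ unitary ℂ := by
  rw [Unitary.mem_iff_star_mul_self, Complex.star_def, Complex.conj_mul',
    Complex.norm_eq_one_of_pow_eq_one (omegaC_isPrimitiveRoot d).pow_eq_one (NeZero.ne d),
    Complex.ofReal_one, one_pow]

lemma Zmat_mem_unitaryGroup (d : ℕ) [NeZero d] : Zmat d ∈ unitaryGroup (ZMod d) ℂ :=
  diagonal_mem_unitaryGroup fun _ => pow_mem (omegaC_mem_unitary d) _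

lemma Xmat_mem_unitaryGroup (d : ℕ) [NeZero d] : Xmat d ∈ unitaryGroup (ZMod d) ℂ := by
  rw [mem_unitaryGroup_iff']
  ext x y
  simp [Xmat, mul_apply, one_apply, star_eq_conjTranspose, eq_comm]

lemma Xmat_pow (d : ℕ) [NeZero d] (n : ℕ) :
    Xmat d ^ n = of fun x y => if x = y + (n : ZMod d) then 1 else 0 := by
  induction n with
  | zero => ext x y; simp [one_apply]
  | succ n ih =>
    rw [pow_succ, ih]
    ext x y
    simp [Xmat, mul_apply, add_assoc, add_comm (1 : ZMod d)]

lemma TW_mem_unitaryGroup (d : ℕ) [NeZero d] (a : ZMod d × ZMod d) :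
    TW d a ∈ unitaryGroup (ZMod d) ℂ :=
  Unitary.smul_mem_of_mem (pow_mem (omegaC_mem_unitary d) _)
    (mul_mem (pow_mem (Zmat_mem_unitaryGroup d) _) (pow_mem (Xmat_mem_unitaryGroup d) _))

lemma trace_Zmat_pow_mul_Xmat_pow (d : ℕ) [NeZero d] (i j : ℕ) :
    (Zmat d ^ i * Xmat d ^ j).trace =
      if (i : ZMod d) = 0 ∧ (j : ZMod d) = 0 then (d : ℂ) else 0 := by
  by_cases hj : (j : ZMod d) = 0
  · simp only [trace, Zmat, diagonal_pow, Xmat_pow, hj, add_zero, diag_apply, diagonal_mul,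
      Pi.pow_apply, of_apply, if_true, mul_one, and_true]
    simp_rw [← pow_mul, mul_comm _ i, pow_mul]
    exact (omegaC_isPrimitiveRoot d).sum_zmod_pow_val i
  · simp [trace, Zmat, Xmat_pow, diagonal_pow, hj]

lemma trace_TW (d : ℕ) [NeZero d] (a : ZMod d × ZMod d) :
    (TW d a).trace = if a = 0 then (d : ℂ) else 0 := by
  rw [TW, trace_smul, trace_Zmat_pow_mul_Xmat_pow, ZMod.natCast_zmod_val, ZMod.natCast_zmod_val]
  by_cases ha : a = 0
  · simp [ha]
  · rw [if_neg, if_neg ha, smul_zero]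
    rwa [Prod.ext_iff] at ha

lemma trace_Apoint0 (d : ℕ) [NeZero d] : (Apoint0 d).trace = 1 := by
  rw [Apoint0, trace_smul, trace_sum]
  simp only [trace_TW, Finset.sum_ite_eq', Finset.mem_univ, if_true, smul_eq_mul]
  exact one_div_mul_cancel (NeZero.natCast_ne d ℂ)

theorem phase_point_unit_trace_general (d : ℕ) [NeZero d] (u : ZMod d × ZMod d) :
    (Apoint d u).trace = 1 := by
  rw [Apoint, trace_mul_mul_conjTranspose_of_mem_unitaryGroup (TW_mem_unitaryGroup d u),
    trace_Apoint0]

/-- Every phase point operator has unit trace. -/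
theorem phase_point_unit_trace (d : ℕ) [NeZero d] (hodd : Odd d) (hd : 1 < d)
    (u : ZMod d × ZMod d) :
    (Apoint d u).trace = 1 :=
  phase_point_unit_trace_general d u
end
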